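/- arXiv:2603.28954 — 2 statements merged into one kernel-verified Lean document; each statement's English description precedes it below -/
import Mathlib

section
/- Let n ≥ 4 and let φ be a prime generalized P-encoding on n input variables of minimum size among all generalized P-encodings on n input variables. Then either there is a generalized P-encoding φ' on n input variables in regular form with |φ'| = |φ|, or there is a generalized P-encoding φ' on n−1 input variables such that |φ| ≥ |φ'| + 3. -/
/-!
In a minimum prime encoding every clause containing `¬x_i` is binary, `{¬x_i, e}` with `e` not
on `x_i`: primality leaves only the literal through which a model with `x_i` true satisfies it,
and minimality excludes the tautology `{¬x_i, x_i}`. Moreover `Q_i` has at least two clauses: if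
`{¬x_i, e}` were the only one, `e` could not be an input literal, and `x_i` could replace the
auxiliary literal `e` everywhere, saving a clause. If some `|Q_i| ≥ 3`, setting `x_i` false gives
the smaller encoding on `n - 1` inputs. Otherwise regularity can only fail through a clause
`{¬x_i, ¬x_j}`; setting `x_i` false then saves the two clauses of `Q_i` and leaves a single clause
in `Q_j`, which the substitution saves as well.
-/

/-- Variables are natural numbers. -/
abbrev Var : Type := ℕ

/-- A literal is a variable together with a polarity (`true` = positive). -/
abbrev Lit : Type := Var × Bool

/-- A clause is a finite set of literals. -/
abbrev Clause : Type := Finset Lit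

/-- A CNF formula is a finite set of clauses; its size is its number of clauses. -/
abbrev CNF : Type := Finset Clause

/-- Evaluation of a literal under a (total) assignment. -/
def Lit.eval (τ : Var → Bool) (l : Lit) : Bool :=
  if l.2 then τ l.1 else !(τ l.1)

/-- The negation of a literal. -/
def Lit.negate (l : Lit) : Lit := (l.1, !l.2)

/-- An assignment satisfies a clause if it makes at least one of its literals true. -/
def Clause.sat (τ : Var → Bool) (C : Clause) : Prop :=
  ∃ l ∈ C, Lit.eval τ l = true

/-- An assignment satisfies a CNF formula if it satisfies every clause. -/
def CNF.sat (τ : Var → Bool) (φ : CNF) : Prop :=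
  ∀ C ∈ φ, Clause.sat τ C

/-- The set of variables occurring in a CNF formula. -/
def CNF.vars (φ : CNF) : Finset Var :=
  φ.sup (fun C => C.image Prod.fst)

/-- The auxiliary variables of a formula whose input variables are `0, …, n-1`. -/
def CNF.auxVars (n : ℕ) (φ : CNF) : Finset Var :=
  CNF.vars φ \ Finset.range n

/-- `φ` encodes the Boolean function `f`, where the input variables `x_1, …, x_n`
are the variables `0, …, n-1`: for every assignment `τ` of the input variables,
`f τ = ⊤` iff `τ` extends to a total assignment satisfying `φ`. -/
def Encodes (n : ℕ) (f : (Fin n → Bool) → Bool) (φ : CNF) : Prop :=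
  ∀ τ : Fin n → Bool,
    f τ = true ↔ ∃ σ : Var → Bool, (∀ i : Fin n, σ i.1 = τ i) ∧ CNF.sat σ φ

/-- A generalized P-encoding on `n` input variables (the input variables being
`0, …, n-1`): (a) `φ ∧ x_i` is satisfiable for each input variable, and
(b) `φ ⊨ ¬x_i ∨ ¬x_j` for all distinct input variables. -/
def GenPEncoding (n : ℕ) (φ : CNF) : Prop :=
  (∀ i < n, ∃ σ : Var → Bool, σ i = true ∧ CNF.sat σ φ) ∧
  (∀ i < n, ∀ j < n, i ≠ j →
    ∀ σ : Var → Bool, CNF.sat σ φ → ¬(σ i = true ∧ σ j = true))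

/-- `Qset φ i` is the set of clauses of `φ` containing the literal `¬x_i`. -/
def Qset (φ : CNF) (i : ℕ) : Finset Clause :=
  φ.filter (fun C => ((i : Var), false) ∈ C)

/-- `φ` is prime if no CNF formula obtained from `φ` by removing a literal from
one of its clauses is a generalized P-encoding on `n` input variables. -/
def PrimeEncoding (n : ℕ) (φ : CNF) : Prop :=
  GenPEncoding n φ ∧
  ∀ C ∈ φ, ∀ l ∈ C, ¬ GenPEncoding n (insert (C.erase l) (φ.erase C))

/-- Regular form: for each input variable `x_i`, `|Q_{φ,i}| = 2`, the only input
variable occurring in the clauses of `Q_{φ,i}` is `x_i`, and each clause of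
`Q_{φ,i}` has exactly two literals. -/
def RegularForm (n : ℕ) (φ : CNF) : Prop :=
  ∀ i < n, (Qset φ i).card = 2 ∧
    (∀ C ∈ Qset φ i, ∀ l ∈ C, l.1 < n → l.1 = i) ∧
    (∀ C ∈ Qset φ i, C.card = 2)

/-- `Lset φ i` is the set of literals `e` such that the clause `{¬x_i, e}`
belongs to `φ`. -/
def Lset (φ : CNF) (i : ℕ) : Set Lit :=
  {e | ({((i : Var), false), e} : Clause) ∈ φ}

open Finset Function

@[simp] theorem Lit.eval_pos (σ : Var → Bool) (v : Var) : Lit.eval σ (v, true) = σ v := rfl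

@[simp] theorem Lit.eval_neg (σ : Var → Bool) (v : Var) : Lit.eval σ (v, false) = !σ v := rfl

theorem Lit.eval_eq_beq (σ : Var → Bool) (l : Lit) : Lit.eval σ l = (σ l.1 == l.2) := by
  obtain ⟨v, b⟩ := l
  cases b <;> simp

theorem Lit.eval_update_of_ne {σ : Var → Bool} {v : Var} {l : Lit} (b : Bool) (h : l.1 ≠ v) :
    Lit.eval (update σ v b) l = Lit.eval σ l := by
  simp only [Lit.eval, update_of_ne h]

theorem Lit.fst_ne_of_ne {l : Lit} {i : Var} (h₁ : l ≠ (i, false)) (h₂ : l ≠ (i, true)) :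
    l.1 ≠ i := by
  obtain ⟨v, b⟩ := l
  rintro rfl
  cases b <;> simp_all

theorem Clause.sat_mono {σ : Var → Bool} {C D : Clause} (h : C ⊆ D) (hC : Clause.sat σ C) :
    Clause.sat σ D :=
  let ⟨l, hl, he⟩ := hC
  ⟨l, h hl, he⟩

theorem CNF.sat_mono {σ : Var → Bool} {φ ψ : CNF} (h : ψ ⊆ φ) (hφ : CNF.sat σ φ) :
    CNF.sat σ ψ :=
  fun C hC => hφ C (h hC)

theorem CNF.sat_of_sat_erase {σ : Var → Bool} {φ : CNF} {C : Clause} (hC : Clause.sat σ C)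
    (h : CNF.sat σ (φ.erase C)) : CNF.sat σ φ := by
  intro D hD
  by_cases hDC : D = C
  · exact hDC ▸ hC
  · exact h D (mem_erase.2 ⟨hDC, hD⟩)

theorem CNF.sat_insert_erase {σ : Var → Bool} {φ : CNF} {C D : Clause} (hφ : CNF.sat σ φ)
    (hD : Clause.sat σ D) : CNF.sat σ (insert D (φ.erase C)) := by
  intro E hE
  rcases mem_insert.1 hE with rfl | hE
  · exact hD
  · exact hφ E (mem_of_mem_erase hE)

theorem CNF.sat_of_sat_insert_erase {σ : Var → Bool} {φ : CNF} {C D : Clause} (hDC : D ⊆ C)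
    (h : CNF.sat σ (insert D (φ.erase C))) : CNF.sat σ φ :=
  CNF.sat_of_sat_erase (Clause.sat_mono hDC (h D (mem_insert_self _ _)))
    (CNF.sat_mono (subset_insert _ _) h)

theorem CNF.sat_update_true {σ : Var → Bool} {φ : CNF} {i : Var} (hσ : CNF.sat σ φ)
    (hQ : ∀ C ∈ Qset φ i, Clause.sat (update σ i true) C) : CNF.sat (update σ i true) φ := by
  intro C hC
  by_cases hiC : (i, false) ∈ C
  · exact hQ C (mem_filter.2 ⟨hC, hiC⟩)
  obtain ⟨⟨v, b⟩, hl, he⟩ := hσ C hC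
  refine ⟨(v, b), hl, ?_⟩
  by_cases hv : v = i
  · subst hv
    cases b
    · exact absurd hl hiC
    · simp
  · rwa [Lit.eval_update_of_ne _ hv]

theorem CNF.sat_update_of_qset_eq_empty {σ : Var → Bool} {φ : CNF} {i : Var}
    (hσ : CNF.sat σ φ) (hσi : σ i = false) (hQ : Qset φ i = ∅) (b : Bool) :
    CNF.sat (update σ i b) φ := by
  cases b
  · rwa [update_eq_self_iff.2 hσi.symm]
  · exact CNF.sat_update_true hσ (by simp [hQ])

def CNF.assignFalse (i : Var) (φ : CNF) : CNF :=
  (φ.filter fun C => (i, false) ∉ C).image fun C => C.erase (i, true)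

theorem CNF.sat_assignFalse_iff {σ : Var → Bool} {i : Var} {φ : CNF} :
    CNF.sat σ (CNF.assignFalse i φ) ↔ CNF.sat (update σ i false) φ := by
  constructor
  · intro h C hC
    by_cases hiC : (i, false) ∈ C
    · exact ⟨_, hiC, by simp⟩
    obtain ⟨l, hl, he⟩ := h _ (mem_image_of_mem _ (mem_filter.2 ⟨hC, hiC⟩))
    obtain ⟨hli, hlC⟩ := mem_erase.1 hl
    have hli : l.1 ≠ i := Lit.fst_ne_of_ne (ne_of_mem_of_not_mem hlC hiC) hli
    exact ⟨l, hlC, by rwa [Lit.eval_update_of_ne _ hli]⟩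
  · rintro h _ hD
    obtain ⟨C, hC, rfl⟩ := mem_image.1 hD
    obtain ⟨hCφ, hiC⟩ := mem_filter.1 hC
    obtain ⟨l, hl, he⟩ := h C hCφ
    have hlt : l ≠ (i, true) := by rintro rfl; simp at he
    have hli : l.1 ≠ i := Lit.fst_ne_of_ne (ne_of_mem_of_not_mem hl hiC) hlt
    exact ⟨l, mem_erase.2 ⟨hlt, hl⟩, by rwa [Lit.eval_update_of_ne _ hli] at he⟩

theorem CNF.card_assignFalse_add_card_qset (i : Var) (φ : CNF) :
    (CNF.assignFalse i φ).card + (Qset φ i).card ≤ φ.card := by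
  calc (CNF.assignFalse i φ).card + (Qset φ i).card
      ≤ (φ.filter fun C => (i, false) ∉ C).card + (Qset φ i).card :=
        Nat.add_le_add_right card_image_le _
    _ = φ.card := by
        rw [add_comm, Qset]
        exact card_filter_add_card_filter_not _

theorem CNF.exists_of_mem_qset_assignFalse {i j : Var} {φ : CNF} {D : Clause}
    (hD : D ∈ Qset (CNF.assignFalse i φ) j) :
    ∃ C ∈ Qset φ j, (i, false) ∉ C ∧ D = C.erase (i, true) := by
  obtain ⟨hDφ, hjD⟩ := mem_filter.1 hD
  obtain ⟨C, hC, rfl⟩ := mem_image.1 hDφ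
  obtain ⟨hCφ, hiC⟩ := mem_filter.1 hC
  exact ⟨C, mem_filter.2 ⟨hCφ, mem_of_mem_erase hjD⟩, hiC, rfl⟩

def CNF.relabel (e : Equiv.Perm Var) (φ : CNF) : CNF :=
  φ.image (Finset.image (Prod.map e id))

theorem CNF.sat_relabel_iff {σ : Var → Bool} {e : Equiv.Perm Var} {φ : CNF} :
    CNF.sat σ (CNF.relabel e φ) ↔ CNF.sat (σ ∘ e) φ := by
  simp only [CNF.sat, CNF.relabel, Clause.sat, forall_mem_image, exists_mem_image]
  rfl

theorem CNF.card_relabel (e : Equiv.Perm Var) (φ : CNF) : (CNF.relabel e φ).card = φ.card :=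
  card_image_of_injective _ (image_injective (Prod.map_injective.2 ⟨e.injective, injective_id⟩))

/-- Substitutes the literal `m` for the variable `v`; `(v, false)` becomes the negation of `m`. -/
def Lit.substVar (v : Var) (m l : Lit) : Lit :=
  if l.1 = v then (m.1, l.2 == m.2) else l

def CNF.substVar (v : Var) (m : Lit) (φ : CNF) : CNF :=
  φ.image (Finset.image (Lit.substVar v m))

theorem Lit.eval_substVar (σ : Var → Bool) (v : Var) (m l : Lit) :
    Lit.eval σ (Lit.substVar v m l) = Lit.eval (update σ v (Lit.eval σ m)) l := by
  obtain ⟨w, b⟩ := l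
  by_cases hw : w = v
  · subst hw
    obtain ⟨u, c⟩ := m
    cases b <;> cases c <;> cases σ u <;> simp [Lit.substVar]
  · simp only [Lit.substVar, if_neg hw]
    exact (Lit.eval_update_of_ne _ hw).symm

theorem CNF.sat_substVar_iff {σ : Var → Bool} {v : Var} {m : Lit} {φ : CNF} :
    CNF.sat σ (CNF.substVar v m φ) ↔ CNF.sat (update σ v (Lit.eval σ m)) φ := by
  simp only [CNF.sat, CNF.substVar, Clause.sat, forall_mem_image, exists_mem_image,
    Lit.eval_substVar]

def IsPEncodingOn (S : Finset Var) (φ : CNF) : Prop :=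
  (∀ i ∈ S, ∃ σ : Var → Bool, σ i = true ∧ CNF.sat σ φ) ∧
  (∀ i ∈ S, ∀ j ∈ S, i ≠ j → ∀ σ : Var → Bool, CNF.sat σ φ → ¬(σ i = true ∧ σ j = true))

def IsMinimumOn (S : Finset Var) (φ : CNF) : Prop :=
  ∀ ψ, IsPEncodingOn S ψ → φ.card ≤ ψ.card

def IsPrimeOn (S : Finset Var) (φ : CNF) : Prop :=
  ∀ C ∈ φ, ∀ l ∈ C, ¬ IsPEncodingOn S (insert (C.erase l) (φ.erase C))

theorem genPEncoding_iff {n : ℕ} {φ : CNF} : GenPEncoding n φ ↔ IsPEncodingOn (range n) φ := by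
  simp only [GenPEncoding, IsPEncodingOn, mem_range]

def RegularAt (S : Finset Var) (φ : CNF) (i : Var) : Prop :=
  (Qset φ i).card = 2 ∧ (∀ C ∈ Qset φ i, ∀ l ∈ C, l.1 ∈ S → l.1 = i) ∧
    ∀ C ∈ Qset φ i, C.card = 2

theorem regularForm_iff {n : ℕ} {φ : CNF} :
    RegularForm n φ ↔ ∀ i ∈ range n, RegularAt (range n) φ i := by
  simp only [RegularForm, RegularAt, mem_range]

namespace IsPEncodingOn

variable {S : Finset Var} {φ : CNF}

theorem eq_false_of_eq_true (hφ : IsPEncodingOn S φ) {i j : Var} (hi : i ∈ S) (hj : j ∈ S)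
    (hij : i ≠ j) {σ : Var → Bool} (hσ : CNF.sat σ φ) (hσi : σ i = true) : σ j = false := by
  simpa using fun h => hφ.2 i hi j hj hij σ hσ ⟨hσi, h⟩

theorem exists_mem_qset_not_sat_update (hφ : IsPEncodingOn S φ) {i k : Var} (hi : i ∈ S)
    (hk : k ∈ S) (hik : i ≠ k) {σ : Var → Bool} (hσ : CNF.sat σ φ) (hσk : σ k = true) :
    ∃ C ∈ Qset φ i, ¬ Clause.sat (update σ i true) C := by
  by_contra! h
  exact hφ.2 i hi k hk hik _ (CNF.sat_update_true hσ h)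
    ⟨update_self .., by rwa [update_of_ne hik.symm]⟩

theorem qset_nonempty (hφ : IsPEncodingOn S φ) (hS : 1 < S.card) {i : Var} (hi : i ∈ S) :
    (Qset φ i).Nonempty := by
  obtain ⟨k, hk, hki⟩ := exists_mem_ne hS i
  obtain ⟨σ, hσk, hσ⟩ := hφ.1 k hk
  obtain ⟨C, hC, -⟩ := hφ.exists_mem_qset_not_sat_update hi hk hki.symm hσ hσk
  exact ⟨C, hC⟩

theorem pair_neg_pos_not_mem (hφ : IsPEncodingOn S φ) {a b : Var} (ha : a ∈ S) (hb : b ∈ S)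
    (hab : a ≠ b) : ({(a, false), (b, true)} : Clause) ∉ φ := by
  intro hC
  obtain ⟨σ, hσa, hσ⟩ := hφ.1 a ha
  have hσb := hφ.eq_false_of_eq_true ha hb hab hσ hσa
  obtain ⟨l, hl, he⟩ := hσ _ hC
  rcases mem_insert.1 hl with rfl | hl
  · simp [hσa] at he
  · rw [mem_singleton.1 hl] at he
    simp [hσb] at he

theorem assignFalse (hφ : IsPEncodingOn S φ) {i : Var} (hi : i ∈ S) :
    IsPEncodingOn (S.erase i) (CNF.assignFalse i φ) := by
  refine ⟨fun k hk => ?_, fun a ha b hb hab σ hσ hσab => ?_⟩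
  · obtain ⟨hki, hk⟩ := mem_erase.1 hk
    obtain ⟨σ, hσk, hσ⟩ := hφ.1 k hk
    refine ⟨σ, hσk, CNF.sat_assignFalse_iff.2 ?_⟩
    rwa [update_eq_self_iff.2 (hφ.eq_false_of_eq_true hk hi hki hσ hσk).symm]
  · obtain ⟨hai, ha⟩ := mem_erase.1 ha
    obtain ⟨hbi, hb⟩ := mem_erase.1 hb
    refine hφ.2 a ha b hb hab _ (CNF.sat_assignFalse_iff.1 hσ) ?_
    rwa [update_of_ne hai, update_of_ne hbi]

theorem relabel (hφ : IsPEncodingOn S φ) (e : Equiv.Perm Var) :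
    IsPEncodingOn (S.map e.toEmbedding) (CNF.relabel e φ) := by
  refine ⟨fun k hk => ?_, fun a ha b hb hab σ hσ hσab => ?_⟩
  · obtain ⟨σ, hσk, hσ⟩ := hφ.1 _ (mem_map_equiv.1 hk)
    refine ⟨σ ∘ e.symm, hσk, CNF.sat_relabel_iff.2 ?_⟩
    simpa [comp_assoc] using hσ
  · refine hφ.2 _ (mem_map_equiv.1 ha) _ (mem_map_equiv.1 hb) (e.symm.injective.ne hab) _
      (CNF.sat_relabel_iff.1 hσ) ?_
    simpa using hσab

/-- As `{¬x_i, (v, pol)}` is the only clause bounding `x_i` from above, `x_i` can take over the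
role of the literal `(v, pol)`. -/
theorem substVar (hφ : IsPEncodingOn S φ) {i v : Var} {pol : Bool} (hi : i ∈ S) (hv : v ∉ S)
    (hC : {(i, false), (v, pol)} ∈ φ) (hQ : Qset φ i ⊆ {{(i, false), (v, pol)}}) :
    IsPEncodingOn S (CNF.substVar v (i, pol) (φ.erase {(i, false), (v, pol)})) := by
  set C : Clause := {(i, false), (v, pol)}
  have hvi : v ≠ i := fun h => hv (h ▸ hi)
  have hQ' : Qset (φ.erase C) i = ∅ := by
    refine filter_eq_empty_iff.2 fun D hD hiD => (mem_erase.1 hD).1 ?_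
    exact mem_singleton.1 (hQ (mem_filter.2 ⟨mem_of_mem_erase hD, hiD⟩))
  refine ⟨fun k hk => ?_, fun a ha b hb hab σ hσ hσab => ?_⟩
  · obtain ⟨σ, hσk, hσ⟩ := hφ.1 k hk
    have hσ' := CNF.sat_mono (erase_subset C φ) hσ
    cases hσi : σ i
    · have hki : k ≠ i := by rintro rfl; simp [hσk] at hσi
      set τ := update σ i (σ v == pol) with hτdef
      have hτ : update τ v (Lit.eval τ (i, pol)) = τ := by
        rw [update_eq_self_iff, Lit.eval_eq_beq]
        simp only [τ, update_self, update_of_ne hvi]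
        cases σ v <;> cases pol <;> rfl
      refine ⟨τ, by rwa [hτdef, update_of_ne hki], CNF.sat_substVar_iff.2 ?_⟩
      rw [hτ]
      exact CNF.sat_update_of_qset_eq_empty hσ' hσi hQ' _
    · have hσv : σ v = pol := by
        obtain ⟨l, hl, he⟩ := hσ C hC
        rcases mem_insert.1 hl with rfl | hl
        · simp [hσi] at he
        · rw [mem_singleton.1 hl, Lit.eval_eq_beq] at he
          exact beq_iff_eq.1 he
      refine ⟨σ, hσk, CNF.sat_substVar_iff.2 ?_⟩
      rwa [(update_eq_self_iff (f := σ)).2 (by rw [Lit.eval_eq_beq, hσi, hσv]; cases pol <;> rfl)]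
  · set τ := update σ v (Lit.eval σ (i, pol)) with hτdef
    have hτC : Clause.sat τ C := by
      cases hσi : σ i
      · exact ⟨(i, false), mem_insert_self _ _, by simp [τ, update_of_ne hvi.symm, hσi]⟩
      · exact ⟨(v, pol), by simp [C], by simp [τ, Lit.eval_eq_beq, hσi]⟩
    refine hφ.2 a ha b hb hab τ (CNF.sat_of_sat_erase hτC (CNF.sat_substVar_iff.1 hσ)) ?_
    rwa [hτdef, update_of_ne (ne_of_mem_of_not_mem ha hv),
      update_of_ne (ne_of_mem_of_not_mem hb hv)]

theorem exists_card_lt_of_qset_subset (hφ : IsPEncodingOn S φ) (hS : 3 ≤ S.card) {j : Var}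
    (hj : j ∈ S) {e : Lit} (hej : e.1 ≠ j) (hQ : Qset φ j ⊆ {{(j, false), e}}) :
    ∃ ψ : CNF, IsPEncodingOn S ψ ∧ ψ.card < φ.card := by
  obtain ⟨u, c⟩ := e
  have hC : {(j, false), (u, c)} ∈ φ := by
    obtain ⟨D, hD⟩ := hφ.qset_nonempty (by omega) hj
    exact mem_singleton.1 (hQ hD) ▸ (mem_filter.1 hD).1
  by_cases hu : u ∈ S
  · exfalso
    cases c
    -- `{¬x_j, ¬x_u}` alone cannot keep `x_j` from being true together with a third input
    · obtain ⟨k, hk⟩ : ((S.erase j).erase u).Nonempty := by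
        rw [← card_pos]
        have := pred_card_le_card_erase (s := S) (a := j)
        have := pred_card_le_card_erase (s := S.erase j) (a := u)
        omega
      obtain ⟨hku, hkj, hk⟩ := by simpa only [mem_erase] using hk
      obtain ⟨σ, hσk, hσ⟩ := hφ.1 k hk
      obtain ⟨D, hD, hDsat⟩ := hφ.exists_mem_qset_not_sat_update hj hk (Ne.symm hkj) hσ hσk
      rw [mem_singleton.1 (hQ hD)] at hDsat
      refine hDsat ⟨(u, false), by simp, ?_⟩
      simp [update_of_ne hej, hφ.eq_false_of_eq_true hk hu hku hσ hσk]
    · exact hφ.pair_neg_pos_not_mem hj hu (Ne.symm hej) hC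
  · exact ⟨_, hφ.substVar hj hu hC hQ, card_image_le.trans_lt (card_erase_lt_of_mem hC)⟩

theorem erase_of_forall_sat (hφ : IsPEncodingOn S φ) {C : Clause}
    (hC : ∀ σ, Clause.sat σ C) : IsPEncodingOn S (φ.erase C) :=
  ⟨fun k hk => let ⟨σ, hσk, hσ⟩ := hφ.1 k hk; ⟨σ, hσk, CNF.sat_mono (erase_subset _ _) hσ⟩,
    fun a ha b hb hab σ hσ => hφ.2 a ha b hb hab σ (CNF.sat_of_sat_erase (hC σ) hσ)⟩

/-- Models with another input set to true satisfy the shortened clause through `¬x_i`. -/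
theorem weaken (hφ : IsPEncodingOn S φ) {i : Var} (hi : i ∈ S) {C : Clause}
    (hiC : (i, false) ∈ C) {l : Lit} (hl : l ≠ (i, false)) {σ : Var → Bool}
    (hσ : CNF.sat σ φ) (hσi : σ i = true) (hσC : Clause.sat σ (C.erase l)) :
    IsPEncodingOn S (insert (C.erase l) (φ.erase C)) := by
  refine ⟨fun k hk => ?_, fun a ha b hb hab τ hτ =>
    hφ.2 a ha b hb hab τ (CNF.sat_of_sat_insert_erase (erase_subset l C) hτ)⟩
  by_cases hki : k = i
  · exact ⟨σ, hki ▸ hσi, CNF.sat_insert_erase hσ hσC⟩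
  · obtain ⟨τ, hτk, hτ⟩ := hφ.1 k hk
    refine ⟨τ, hτk, CNF.sat_insert_erase hτ ⟨(i, false), mem_erase.2 ⟨hl.symm, hiC⟩, ?_⟩⟩
    simp [hφ.eq_false_of_eq_true hk hi hki hτ hτk]

theorem exists_eq_pair_of_mem_qset_of_prime (hφ : IsPEncodingOn S φ) (hprime : IsPrimeOn S φ)
    {i : Var} (hi : i ∈ S) {C : Clause} (hC : C ∈ Qset φ i) :
    ∃ e, e ≠ (i, false) ∧ C = {(i, false), e} := by
  obtain ⟨hCφ, hiC⟩ := mem_filter.1 hC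
  obtain ⟨σ, hσi, hσ⟩ := hφ.1 i hi
  obtain ⟨e, heC, he⟩ := hσ C hCφ
  have hei : e ≠ (i, false) := by rintro rfl; simp [hσi] at he
  refine ⟨e, hei, Subset.antisymm (fun l hl => ?_) (insert_subset hiC (singleton_subset_iff.2 heC))⟩
  by_contra hl'
  simp only [mem_insert, mem_singleton, not_or] at hl'
  exact hprime C hCφ l hl
    (hφ.weaken hi hiC hl'.1 hσ hσi ⟨e, mem_erase.2 ⟨Ne.symm hl'.2, heC⟩, he⟩)

theorem exists_eq_pair_of_mem_qset (hφ : IsPEncodingOn S φ) (hmin : IsMinimumOn S φ)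
    (hprime : IsPrimeOn S φ) {i : Var} (hi : i ∈ S) {C : Clause} (hC : C ∈ Qset φ i) :
    ∃ e : Lit, e.1 ≠ i ∧ C = {(i, false), e} := by
  obtain ⟨⟨v, b⟩, hei, rfl⟩ := hφ.exists_eq_pair_of_mem_qset_of_prime hprime hi hC
  refine ⟨(v, b), fun hvi => ?_, rfl⟩
  obtain rfl : v = i := hvi
  cases b
  · exact hei rfl
  · have htaut : ∀ σ, Clause.sat σ {(v, false), (v, true)} := fun σ => by
      cases hσ : σ v
      · exact ⟨(v, false), by simp, by simp [hσ]⟩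
      · exact ⟨(v, true), by simp, by simp [hσ]⟩
    have := hmin _ (hφ.erase_of_forall_sat htaut)
    have := card_erase_lt_of_mem (mem_filter.1 hC).1
    omega

theorem two_le_card_qset (hφ : IsPEncodingOn S φ) (hmin : IsMinimumOn S φ)
    (hprime : IsPrimeOn S φ) (hS : 3 ≤ S.card) {i : Var} (hi : i ∈ S) :
    2 ≤ (Qset φ i).card := by
  by_contra! h
  have hpos := card_pos.2 (hφ.qset_nonempty (by omega) hi)
  obtain ⟨C, hQ⟩ := card_eq_one.1 (by omega : (Qset φ i).card = 1)
  obtain ⟨e, hei, rfl⟩ := hφ.exists_eq_pair_of_mem_qset hmin hprime hi (hQ ▸ mem_singleton_self _)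
  obtain ⟨ψ, hψ, hcard⟩ := hφ.exists_card_lt_of_qset_subset hS hi hei hQ.subset
  exact (hmin ψ hψ).not_gt hcard

theorem exists_reduction_of_three_le_card_qset (hφ : IsPEncodingOn S φ) {i : Var} (hi : i ∈ S)
    (hQ : 3 ≤ (Qset φ i).card) :
    ∃ k ∈ S, ∃ ψ : CNF, IsPEncodingOn (S.erase k) ψ ∧ ψ.card + 3 ≤ φ.card :=
  ⟨i, hi, _, hφ.assignFalse hi, by have := CNF.card_assignFalse_add_card_qset i φ; omega⟩

/-- Setting `x_i` false saves the two clauses of `Q_i` and leaves a single clause in `Q_j`,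
which `exists_card_lt_of_qset_subset` then saves as well. -/
theorem exists_reduction_of_neg_pair (hφ : IsPEncodingOn S φ) (hmin : IsMinimumOn S φ)
    (hprime : IsPrimeOn S φ) (hS : 4 ≤ S.card) {i j : Var} (hi : i ∈ S) (hj : j ∈ S)
    (hij : i ≠ j) (hC : {(i, false), (j, false)} ∈ φ) :
    ∃ k ∈ S, ∃ ψ : CNF, IsPEncodingOn (S.erase k) ψ ∧ ψ.card + 3 ≤ φ.card := by
  set C₁ : Clause := {(i, false), (j, false)}
  have hC₁ : C₁ ∈ Qset φ j := mem_filter.2 ⟨hC, by simp [C₁]⟩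
  by_cases hQj : 3 ≤ (Qset φ j).card
  · exact hφ.exists_reduction_of_three_le_card_qset hj hQj
  have hQj2 : (Qset φ j).card = 2 := by
    have := hφ.two_le_card_qset hmin hprime (by omega) hj
    omega
  obtain ⟨C₂, hC₂, hC₂₁⟩ := exists_mem_ne (by omega : 1 < (Qset φ j).card) C₁
  have hQj_eq : Qset φ j = {C₁, C₂} :=
    (eq_of_subset_of_card_le (insert_subset hC₁ (singleton_subset_iff.2 hC₂))
      (by rw [hQj2, card_pair hC₂₁.symm])).symm
  obtain ⟨⟨u, c⟩, huj, rfl⟩ := hφ.exists_eq_pair_of_mem_qset hmin hprime hj hC₂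
  have hui : u ≠ i := by
    rintro rfl
    cases c
    · exact hC₂₁ (pair_comm _ _)
    · exact hφ.pair_neg_pos_not_mem hj hi hij.symm (mem_filter.1 hC₂).1
  have hQψ : Qset (CNF.assignFalse i φ) j ⊆ {{(j, false), (u, c)}} := by
    intro D hD
    obtain ⟨C, hC, hiC, rfl⟩ := CNF.exists_of_mem_qset_assignFalse hD
    rw [hQj_eq] at hC
    rcases mem_insert.1 hC with rfl | hC
    · simp [C₁] at hiC
    · rw [mem_singleton.1 hC, mem_singleton]
      exact erase_eq_of_notMem (by simp [hij, hui.symm])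
  have hSi : 3 ≤ (S.erase i).card := by
    have := pred_card_le_card_erase (s := S) (a := i)
    omega
  obtain ⟨ψ, hψ, hcard⟩ := (hφ.assignFalse hi).exists_card_lt_of_qset_subset hSi
    (mem_erase.2 ⟨hij.symm, hj⟩) huj hQψ
  have := CNF.card_assignFalse_add_card_qset i φ
  have := hφ.two_le_card_qset hmin hprime (by omega) hi
  exact ⟨i, hi, ψ, hψ, by omega⟩

theorem exists_reduction_of_not_regularAt (hφ : IsPEncodingOn S φ) (hmin : IsMinimumOn S φ)
    (hprime : IsPrimeOn S φ) (hS : 4 ≤ S.card) {i : Var} (hi : i ∈ S)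
    (hreg : ¬ RegularAt S φ i) :
    ∃ k ∈ S, ∃ ψ : CNF, IsPEncodingOn (S.erase k) ψ ∧ ψ.card + 3 ≤ φ.card := by
  by_cases hQi : 3 ≤ (Qset φ i).card
  · exact hφ.exists_reduction_of_three_le_card_qset hi hQi
  have hQi2 : (Qset φ i).card = 2 := by
    have := hφ.two_le_card_qset hmin hprime (by omega) hi
    omega
  have hbin : ∀ C ∈ Qset φ i, C.card = 2 := by
    intro C hC
    obtain ⟨e, hei, rfl⟩ := hφ.exists_eq_pair_of_mem_qset hmin hprime hi hC
    exact card_pair fun h => hei (congrArg Prod.fst h).symm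
  have hnoninput : ¬ ∀ C ∈ Qset φ i, ∀ l ∈ C, l.1 ∈ S → l.1 = i :=
    fun h => hreg ⟨hQi2, h, hbin⟩
  push Not at hnoninput
  obtain ⟨C, hC, l, hl, hlS, hli⟩ := hnoninput
  obtain ⟨⟨j, c⟩, hji, rfl⟩ := hφ.exists_eq_pair_of_mem_qset hmin hprime hi hC
  obtain rfl : l = (j, c) := by
    rcases mem_insert.1 hl with rfl | hl
    · exact absurd rfl hli
    · exact mem_singleton.1 hl
  cases c
  · exact hφ.exists_reduction_of_neg_pair hmin hprime hS hi hlS hji.symm (mem_filter.1 hC).1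
  · exact absurd (mem_filter.1 hC).1 (hφ.pair_neg_pos_not_mem hi hlS hji.symm)

end IsPEncodingOn

theorem map_swap_erase_range {n i : ℕ} (hi : i < n) :
    ((range n).erase i).map (Equiv.swap i (n - 1)).toEmbedding = range (n - 1) := by
  ext x
  simp only [mem_map_equiv, Equiv.symm_swap, mem_erase, mem_range, Equiv.swap_apply_def]
  split_ifs <;> omega

theorem exists_genPEncoding_pred {n i : ℕ} (hi : i < n) {ψ : CNF}
    (hψ : IsPEncodingOn ((range n).erase i) ψ) :
    ∃ ψ' : CNF, GenPEncoding (n - 1) ψ' ∧ ψ'.card = ψ.card :=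
  ⟨CNF.relabel (Equiv.swap i (n - 1)) ψ,
    genPEncoding_iff.2 (map_swap_erase_range hi ▸ hψ.relabel _), CNF.card_relabel _ _⟩

/-- Let `n ≥ 4` and let `φ` be a prime generalized P-encoding on `n` input
variables of minimum size among all generalized P-encodings on `n` input
variables. Then either there is a generalized P-encoding on `n` input variables
in regular form of the same size, or there is a generalized P-encoding on `n−1`
input variables with at least three fewer clauses. -/
theorem regular_form_reduction (n : ℕ) (hn : 4 ≤ n) (φ : CNF)
    (hprime : PrimeEncoding n φ)
    (hmin : ∀ ψ : CNF, GenPEncoding n ψ → φ.card ≤ ψ.card) :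
    (∃ φ' : CNF, GenPEncoding n φ' ∧ RegularForm n φ' ∧ φ'.card = φ.card) ∨
    (∃ φ' : CNF, GenPEncoding (n - 1) φ' ∧ φ'.card + 3 ≤ φ.card) := by
  by_cases hreg : RegularForm n φ
  · exact Or.inl ⟨φ, hprime.1, hreg, rfl⟩
  obtain ⟨i, hi, hnreg⟩ : ∃ i ∈ range n, ¬ RegularAt (range n) φ i := by
    simpa [regularForm_iff] using hreg
  obtain ⟨k, hk, ψ, hψ, hcard⟩ := (genPEncoding_iff.1 hprime.1).exists_reduction_of_not_regularAt
    (fun ψ hψ => hmin ψ (genPEncoding_iff.2 hψ))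
    (fun C hC l hl h => hprime.2 C hC l hl (genPEncoding_iff.2 h))
    (by simpa using hn) hi hnreg
  obtain ⟨ψ', hψ', hcard'⟩ := exists_genPEncoding_pred (mem_range.1 hk) hψ
  exact Or.inr ⟨ψ', hψ', hcard' ▸ hcard⟩
end

section
/- Let φ be a generalized P-encoding on n input variables in regular form, let ψ be the CNF formula obtained from φ by deleting all clauses belonging to some Q_{φ,k} (k ∈ [n]), and let i, j ∈ [n] be distinct with L_{φ,i} = {ℓ_{i,1}, ℓ_{i,2}} and L_{φ,j} = {ℓ_{j,1}, ℓ_{j,2}}. Then the formula ψ|_{τ_i} ∧ ℓ_{i,1} ∧ ℓ_{i,2} ∧ ℓ_{j,1} ∧ ℓ_{j,2} is unsatisfiable. -/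
/-- Evaluation of a literal under a partial assignment. -/
def Lit.evalP (τ : Var → Option Bool) (l : Lit) : Option Bool :=
  (τ l.1).map (fun b => if l.2 then b else !b)

/-- The restriction `φ|_τ`: delete every clause satisfied by the partial
assignment `τ`, and from each remaining clause delete every literal falsified
by `τ`. -/
noncomputable def CNF.restrict (φ : CNF) (τ : Var → Option Bool) : CNF := by
  classical
  exact (φ.filter (fun C => ¬ ∃ l ∈ C, Lit.evalP τ l = some true)).image
    (fun C => C.filter (fun l => ¬ Lit.evalP τ l = some false))

/-- The partial assignment `τ_i` setting input variable `x_i` to `⊤`, every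
other input variable (those `< n`) to `⊥`, and leaving auxiliary variables
unassigned. -/
def tauAssign (n i : ℕ) : Var → Option Bool :=
  fun v => if v < n then some (decide (v = i)) else none

/-! Suppose `σ` satisfied the formula. Keep `σ` on the auxiliary variables and set exactly the
inputs `x_i` and `x_j` to `⊤`. A clause of `φ` without negative input literals lies in `ψ`, so it
is satisfied by `σ` completed by `τ_i`, and raising `x_j` keeps it satisfied. A clause containing
`¬x_k` with `k ∉ {i, j}` is satisfied by `x_k = ⊥`. In regular form, a clause containing `¬x_i`
or `¬x_j` is a binary clause `{¬x_k, ℓ}` with `ℓ ∈ L_{φ,k}`, satisfied by the unit clauses. So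
`φ` would be satisfied with `x_i = x_j = ⊤`, contradicting `φ ⊨ ¬x_i ∨ ¬x_j`. -/

def completeWith (τ : Var → Option Bool) (σ : Var → Bool) : Var → Bool :=
  fun v => (τ v).getD (σ v)

theorem CNF.sat_union {σ : Var → Bool} {φ ψ : CNF} :
    CNF.sat σ (φ ∪ ψ) ↔ CNF.sat σ φ ∧ CNF.sat σ ψ := by
  simp only [CNF.sat, Finset.mem_union, or_imp, forall_and]

theorem Clause.sat_singleton {σ : Var → Bool} {l : Lit} :
    Clause.sat σ {l} ↔ Lit.eval σ l = true := by
  simp [Clause.sat]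

theorem Lit.eval_congr {σ σ' : Var → Bool} {l : Lit} (h : σ l.1 = σ' l.1) :
    Lit.eval σ l = Lit.eval σ' l := by
  simp only [Lit.eval, h]

theorem Lit.eval_completeWith_of_evalP_eq_some {τ : Var → Option Bool} {σ : Var → Bool}
    {l : Lit} {b : Bool} (h : Lit.evalP τ l = some b) :
    Lit.eval (completeWith τ σ) l = b := by
  obtain ⟨c, hc, rfl⟩ := Option.map_eq_some_iff.mp h
  simp [Lit.eval, completeWith, hc]

theorem Lit.eq_none_of_evalP_ne_some {τ : Var → Option Bool} {l : Lit}
    (htrue : Lit.evalP τ l ≠ some true) (hfalse : Lit.evalP τ l ≠ some false) :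
    τ l.1 = none := by
  cases hτ : τ l.1 with
  | none => rfl
  | some c => cases hb : (if l.2 then c else !c) <;> simp_all [Lit.evalP]

theorem CNF.mem_restrict {φ : CNF} {τ : Var → Option Bool} {C : Clause} (hC : C ∈ φ)
    (hτ : ¬ ∃ l ∈ C, Lit.evalP τ l = some true) :
    C.filter (fun l => ¬ Lit.evalP τ l = some false) ∈ CNF.restrict φ τ := by
  classical
  exact Finset.mem_image.mpr ⟨C, Finset.mem_filter.mpr ⟨hC, hτ⟩, rfl⟩

theorem CNF.sat_completeWith_of_sat_restrict {φ : CNF} {τ : Var → Option Bool}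
    {σ : Var → Bool} (hσ : CNF.sat σ (CNF.restrict φ τ)) :
    CNF.sat (completeWith τ σ) φ := by
  classical
  intro C hC
  by_cases hτ : ∃ l ∈ C, Lit.evalP τ l = some true
  · obtain ⟨l, hl, hev⟩ := hτ
    exact ⟨l, hl, Lit.eval_completeWith_of_evalP_eq_some hev⟩
  · obtain ⟨l, hl, hev⟩ := hσ _ (CNF.mem_restrict hC hτ)
    obtain ⟨hlC, hnf⟩ := Finset.mem_filter.mp hl
    have hnone : τ l.1 = none :=
      Lit.eq_none_of_evalP_ne_some (fun ht => hτ ⟨l, hlC, ht⟩) hnf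
    refine ⟨l, hlC, ?_⟩
    rw [Lit.eval_congr (σ' := σ) (by simp [completeWith, hnone]), hev]

theorem Clause.sat_update_true {σ : Var → Bool} {C : Clause} {v : Var}
    (hv : (v, false) ∉ C) (hσ : Clause.sat σ C) :
    Clause.sat (Function.update σ v true) C := by
  obtain ⟨l, hl, hev⟩ := hσ
  refine ⟨l, hl, ?_⟩
  by_cases hlv : l.1 = v
  · have hpos : l.2 = true := by
      by_contra hneg
      exact hv ((Prod.ext hlv (by simpa using hneg) : l = (v, false)) ▸ hl)
    simp [Lit.eval, hlv, hpos]
  · rwa [← Lit.eval_congr (σ := σ) (by simp [hlv])]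

theorem CNF.sat_of_sat_Qset {n : ℕ} {φ : CNF} {σ : Var → Bool}
    (hpos : CNF.sat σ (φ.filter (fun C => ∀ k < n, ((k : Var), false) ∉ C)))
    (hQ : ∀ k < n, CNF.sat σ (Qset φ k)) :
    CNF.sat σ φ := by
  intro C hC
  by_cases hneg : ∀ k < n, ((k : Var), false) ∉ C
  · exact hpos C (Finset.mem_filter.mpr ⟨hC, hneg⟩)
  · push Not at hneg
    obtain ⟨k, hk, hkC⟩ := hneg
    exact hQ k hk C (Finset.mem_filter.mpr ⟨hC, hkC⟩)

theorem CNF.sat_Qset_of_eq_false {φ : CNF} {σ : Var → Bool} {k : ℕ} (hk : σ k = false) :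
    CNF.sat σ (Qset φ k) := fun C hC =>
  ⟨((k : Var), false), (Finset.mem_filter.mp hC).2, by simp [Lit.eval, hk]⟩

theorem RegularForm.eq_pair_of_mem_Qset {n : ℕ} {φ : CNF} (hreg : RegularForm n φ) {k : ℕ}
    (hk : k < n) {C : Clause} (hC : C ∈ Qset φ k) :
    ∃ e ∈ Lset φ k, e ≠ ((k : Var), false) ∧ C = {((k : Var), false), e} := by
  obtain ⟨hCφ, hkC⟩ := Finset.mem_filter.mp hC
  obtain ⟨e, he⟩ := Finset.card_eq_one.mp (by
    rw [Finset.card_erase_of_mem hkC, (hreg k hk).2.2 C hC] :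
      (C.erase ((k : Var), false)).card = 1)
  have hCe : C = {((k : Var), false), e} := by rw [← Finset.insert_erase hkC, he]
  have hek : e ≠ ((k : Var), false) :=
    Finset.ne_of_mem_erase (by rw [he]; exact Finset.mem_singleton_self e)
  exact ⟨e, show _ ∈ φ from hCe ▸ hCφ, hek, hCe⟩

/-- The only input literal a clause of `Q_{φ,k}` can contain besides `¬x_k` is `x_k`. -/
theorem RegularForm.sat_Qset {n : ℕ} {φ : CNF} (hreg : RegularForm n φ) {k : ℕ} (hk : k < n)
    {σ : Var → Bool} (hσk : σ k = true)
    (hL : ∀ e ∈ Lset φ k, n ≤ e.1 → Lit.eval σ e = true) :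
    CNF.sat σ (Qset φ k) := by
  intro C hC
  obtain ⟨e, heL, hek, rfl⟩ := hreg.eq_pair_of_mem_Qset hk hC
  refine ⟨e, by simp, ?_⟩
  by_cases hen : e.1 < n
  · have he1 : e.1 = k := (hreg k hk).2.1 _ hC e (by simp) hen
    have he2 : e.2 = true := by
      by_contra hneg
      exact hek (Prod.ext he1 (by simpa using hneg))
    simp [Lit.eval, he1, he2, hσk]
  · exact hL e heL (not_lt.mp hen)

/-- Let `φ` be a generalized P-encoding on `n` input variables in regular form,
let `ψ` be obtained from `φ` by deleting all clauses belonging to some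
`Q_{φ,k}` (`k ∈ [n]`), and let `i ≠ j` with `L_{φ,i} = {ℓ_{i,1}, ℓ_{i,2}}` and
`L_{φ,j} = {ℓ_{j,1}, ℓ_{j,2}}`. Then `ψ|_{τ_i} ∧ ℓ_{i,1} ∧ ℓ_{i,2} ∧ ℓ_{j,1} ∧ ℓ_{j,2}`
is unsatisfiable. -/
theorem two_edge_conflict (n : ℕ) (φ : CNF)
    (h : GenPEncoding n φ) (hreg : RegularForm n φ)
    (ψ : CNF) (hψ : ψ = φ.filter (fun C => ∀ k < n, ((k : Var), false) ∉ C))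
    (i j : ℕ) (hi : i < n) (hj : j < n) (hij : i ≠ j)
    (li1 li2 lj1 lj2 : Lit)
    (hLi : Lset φ i = {li1, li2}) (hLj : Lset φ j = {lj1, lj2}) :
    ¬ ∃ σ : Var → Bool,
      CNF.sat σ (CNF.restrict ψ (tauAssign n i) ∪
        ({{li1}, {li2}, {lj1}, {lj2}} : CNF)) := by
  rintro ⟨σ, hsat⟩
  obtain ⟨hres, hunits⟩ := CNF.sat_union.mp hsat
  simp only [CNF.sat, Finset.mem_insert, Finset.mem_singleton, forall_eq_or_imp, forall_eq,
    Clause.sat_singleton] at hunits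
  obtain ⟨h1, h2, h3, h4⟩ := hunits
  set σ' := Function.update (completeWith (tauAssign n i) σ) j true
  have hσ'_input : ∀ v < n, σ' v = decide (v = i ∨ v = j) := by
    intro v hv
    by_cases hvj : v = j <;> simp [σ', hvj, completeWith, tauAssign, hv]
  have hσ'_aux : ∀ v, n ≤ v → σ' v = σ v := by
    intro v hv
    simp [σ', completeWith, tauAssign, not_lt.mpr hv, (hj.trans_le hv).ne']
  have hL : ∀ k, ∀ a b : Lit, Lset φ k = {a, b} → Lit.eval σ a = true →
      Lit.eval σ b = true → ∀ e ∈ Lset φ k, n ≤ e.1 → Lit.eval σ' e = true := by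
    rintro k a b hab ha hb e he hen
    rw [Lit.eval_congr (hσ'_aux e.1 hen)]
    rcases hab ▸ he with rfl | rfl <;> assumption
  refine h.2 i hi j hj hij σ' (CNF.sat_of_sat_Qset (n := n) ?_ fun k hk => ?_)
    ⟨by simp [hσ'_input i hi], by simp [hσ'_input j hj]⟩
  · intro C hC
    refine Clause.sat_update_true ((Finset.mem_filter.mp hC).2 j hj) ?_
    exact CNF.sat_completeWith_of_sat_restrict hres C (hψ ▸ hC)
  · by_cases hki : k = i
    · exact hreg.sat_Qset hk (by rw [hσ'_input k hk]; simp [hki])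
        (hL k li1 li2 (hki ▸ hLi) h1 h2)
    by_cases hkj : k = j
    · exact hreg.sat_Qset hk (by rw [hσ'_input k hk]; simp [hkj])
        (hL k lj1 lj2 (hkj ▸ hLj) h3 h4)
    exact CNF.sat_Qset_of_eq_false (by simp [hσ'_input k hk, hki, hkj])
end
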